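/- For every finitely based permutation class X = Av(D), the wreath product X ≀ Av(21) with the class of increasing permutations is finitely based; in particular, every basis element of X ≀ Av(21) has length at most d + (d−1)·b where d = max length of elements of D and b is an absolute constant. -/

import Mathlib

/-- Pattern involvement: `σ` occurs as a pattern in `π`. -/
def Involves {k n : ℕ} (σ : Equiv.Perm (Fin k)) (π : Equiv.Perm (Fin n)) : Prop :=
  ∃ f : Fin k → Fin n, StrictMono f ∧ ∀ a b : Fin k, σ a < σ b ↔ π (f a) < π (f b)

/-- Finite permutations of arbitrary length. -/
abbrev PermS := Σ n : ℕ, Equiv.Perm (Fin n)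

/-- Pattern involvement on permutations of arbitrary length. -/
def SInvolves (s t : PermS) : Prop := Involves s.2 t.2

/-- A permutation class: a set of permutations closed downwards under involvement. -/
def IsPermClass (X : Set PermS) : Prop :=
  ∀ s t : PermS, SInvolves s t → t ∈ X → s ∈ X

/-- A set of positions is consecutive (order-convex). -/
def Consec {n : ℕ} (s : Finset (Fin n)) : Prop :=
  ∀ ⦃a b c : Fin n⦄, a ∈ s → c ∈ s → a ≤ b → b ≤ c → b ∈ s

/-- An interval (block) of a permutation: consecutive positions with consecutive values. -/
def IsInterval {n : ℕ} (π : Equiv.Perm (Fin n)) (s : Finset (Fin n)) : Prop :=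
  Consec s ∧ Consec (s.image π)

/-- `α` is the pattern of `π` on the set of positions `s`. -/
def IsPatternOf {k n : ℕ} (α : Equiv.Perm (Fin k)) (π : Equiv.Perm (Fin n))
    (s : Finset (Fin n)) : Prop :=
  ∃ f : Fin k → Fin n, StrictMono f ∧ (∀ i, f i ∈ s) ∧ (∀ x ∈ s, ∃ i, f i = x) ∧
    ∀ a b : Fin k, α a < α b ↔ π (f a) < π (f b)

/-- `π` is the inflation of `σ` with the given (nonempty, interval) blocks. -/
def IsInflation {n m : ℕ} (π : Equiv.Perm (Fin n)) (σ : Equiv.Perm (Fin m))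
    (blocks : Fin m → Finset (Fin n)) : Prop :=
  (∀ i, (blocks i).Nonempty) ∧
  (∀ i, IsInterval π (blocks i)) ∧
  (∀ x : Fin n, ∃! i, x ∈ blocks i) ∧
  (∀ i j : Fin m, i < j → ∀ x ∈ blocks i, ∀ y ∈ blocks j, x < y) ∧
  (∀ i j : Fin m, i ≠ j → ∀ x ∈ blocks i, ∀ y ∈ blocks j, (σ i < σ j ↔ π x < π y))

/-- `π'` is a `Y`-deflation of `π`: `π = π'[α₁,…,α_k]` with all `αᵢ ∈ Y`. -/
def IsYDeflation (Y : Set PermS) {m n : ℕ} (π' : Equiv.Perm (Fin m))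
    (π : Equiv.Perm (Fin n)) : Prop :=
  ∃ blocks : Fin m → Finset (Fin n), IsInflation π π' blocks ∧
    ∀ i, ∃ (k : ℕ) (α : Equiv.Perm (Fin k)), (⟨k, α⟩ : PermS) ∈ Y ∧ IsPatternOf α π (blocks i)

/-- Membership in the wreath product `X ≀ Y`. -/
def InWreath (X Y : Set PermS) {n : ℕ} (π : Equiv.Perm (Fin n)) : Prop :=
  ∃ (m : ℕ) (σ : Equiv.Perm (Fin m)), (⟨m, σ⟩ : PermS) ∈ X ∧ IsYDeflation Y σ π

/-- The wreath product `X ≀ Y` as a set of permutations. -/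
def WreathSet (X Y : Set PermS) : Set PermS := {s : PermS | InWreath X Y s.2}

/-- The class of permutations avoiding every pattern in `B`. -/
def Av (B : Set PermS) : Set PermS := {s : PermS | ∀ b ∈ B, ¬ SInvolves b s}

/-- The basis of a class: minimal permutations not in it. -/
def PermBasis (C : Set PermS) : Set PermS :=
  {s : PermS | s ∉ C ∧ ∀ t : PermS, SInvolves t s → t ≠ s → t ∈ C}

/-- A permutation is simple if its only intervals are trivial. -/
def IsSimple {n : ℕ} (π : Equiv.Perm (Fin n)) : Prop :=
  ∀ s : Finset (Fin n), IsInterval π s → s.card ≤ 1 ∨ s = Finset.univ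

/-- Sum decomposable: a proper nonempty initial block with the smallest values. -/
def SumDecomposable {n : ℕ} (π : Equiv.Perm (Fin n)) : Prop :=
  ∃ s : Finset (Fin n), s.Nonempty ∧ s ≠ Finset.univ ∧
    ∀ x ∈ s, ∀ y : Fin n, y ∉ s → x < y ∧ π x < π y

/-- Skew decomposable: a proper nonempty initial block with the largest values. -/
def SkewDecomposable {n : ℕ} (π : Equiv.Perm (Fin n)) : Prop :=
  ∃ s : Finset (Fin n), s.Nonempty ∧ s ≠ Finset.univ ∧
    ∀ x ∈ s, ∀ y : Fin n, y ∉ s → x < y ∧ π y < π x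


/-! Call `(p, p + 1)` a break of `π` when `π (p + 1) ≠ π p + 1`. The maximal break-free segments
of `π` are increasing intervals, so `π` is the inflation, by increasing permutations, of the
pattern `σ` of one point from each segment. If `σ` avoids `D`, then `π ∈ Av D ≀ Av(21)`.
Otherwise a copy of some `δ ∈ D` in `σ` gives points of `π` separated pairwise by breaks. A block
of an `Av(21)`-deflation contains no break, so in any such deflation of a pattern that retains
these points together with the breaks between them, the points fall into distinct blocks and `δ`
occurs in the deflated permutation. Retaining the `|δ|` points and three witnesses for each of the
`|δ| - 1` breaks between consecutive ones gives a pattern of length at most `d + 3 (d - 1)` outside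
the wreath product, and a basis element must be that pattern itself. -/

open Finset

section Patterns

variable {k n : ℕ}

theorem exists_perm_lt_iff_lt {α : Type*} [LinearOrder α] (f : Fin k → α)
    (hf : Function.Injective f) : ∃ σ : Equiv.Perm (Fin k), ∀ a b, σ a < σ b ↔ f a < f b := by
  have hsorted : StrictMono (f ∘ Tuple.sort f) :=
    (Tuple.monotone_sort f).strictMono_of_injective (hf.comp (Tuple.sort f).injective)
  refine ⟨(Tuple.sort f).symm, fun a b => ?_⟩
  rw [← hsorted.lt_iff_lt]
  simp

theorem exists_isPatternOf (π : Equiv.Perm (Fin n)) (S : Finset (Fin n)) :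
    ∃ α : Equiv.Perm (Fin S.card), IsPatternOf α π S := by
  obtain ⟨α, hα⟩ := exists_perm_lt_iff_lt (π ∘ S.orderEmbOfFin rfl)
    (π.injective.comp (S.orderEmbOfFin rfl).injective)
  refine ⟨α, S.orderEmbOfFin rfl, (S.orderEmbOfFin rfl).strictMono,
    S.orderEmbOfFin_mem rfl, fun x hx => ?_, hα⟩
  obtain ⟨i, hi⟩ := (S.orderIsoOfFin rfl).surjective ⟨x, hx⟩
  exact ⟨i, congrArg Subtype.val hi⟩

theorem IsPatternOf.sInvolves {α : Equiv.Perm (Fin k)} {π : Equiv.Perm (Fin n)}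
    {S : Finset (Fin n)} (h : IsPatternOf α π S) : SInvolves ⟨k, α⟩ ⟨n, π⟩ :=
  let ⟨f, hf, _, _, hα⟩ := h
  ⟨f, hf, hα⟩

theorem IsPatternOf.strictMono_iff {α : Equiv.Perm (Fin k)} {π : Equiv.Perm (Fin n)}
    {S : Finset (Fin n)} (h : IsPatternOf α π S) : StrictMono α ↔ StrictMonoOn π S := by
  obtain ⟨f, hf, hfS, hSf, hα⟩ := h
  constructor
  · intro hmono u hu w hw huw
    obtain ⟨a, rfl⟩ := hSf u hu
    obtain ⟨b, rfl⟩ := hSf w hw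
    exact (hα a b).1 (hmono (hf.lt_iff_lt.1 huw))
  · intro hmono a b hab
    exact (hα a b).2 (hmono (hfS a) (hfS b) (hf hab))

end Patterns

abbrev Av21 : Set PermS := Av {(⟨2, Equiv.swap 0 1⟩ : PermS)}

theorem involves_swap_iff {k : ℕ} (α : Equiv.Perm (Fin k)) :
    Involves (Equiv.swap 0 1 : Equiv.Perm (Fin 2)) α ↔ ∃ a b, a < b ∧ α b < α a := by
  constructor
  · rintro ⟨f, hf, hα⟩
    have hswap : ¬ α (f 0) < α (f 1) := by simpa using hα 0 1
    refine ⟨f 0, f 1, hf Fin.zero_lt_one, ?_⟩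
    exact lt_of_le_of_ne (not_lt.1 hswap) (α.injective.ne (hf Fin.zero_lt_one).ne')
  · rintro ⟨a, b, hab, hba⟩
    refine ⟨![a, b], Fin.strictMono_iff_lt_succ.2 (by simpa using hab), ?_⟩
    simp [Fin.forall_fin_two, hba, hba.le]

theorem mem_av21_iff {k : ℕ} (α : Equiv.Perm (Fin k)) :
    (⟨k, α⟩ : PermS) ∈ Av21 ↔ StrictMono α := by
  simp only [Av, Set.mem_ofPred_eq, Set.mem_singleton_iff, forall_eq, SInvolves,
    involves_swap_iff, not_exists, not_and, not_lt]
  refine ⟨fun h a b hab => lt_of_le_of_ne (h a b hab) (α.injective.ne hab.ne), ?_⟩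
  exact fun h a b hab => (h hab).le

section Inflations

variable {k m n : ℕ}

theorem Consec.lt_iff_lt_of_notMem {s : Finset (Fin n)} (hs : Consec s) {a a' c : Fin n}
    (ha : a ∈ s) (ha' : a' ∈ s) (hc : c ∉ s) : a < c ↔ a' < c := by
  have key : ∀ {a a'}, a ∈ s → a' ∈ s → a < c → a' < c := fun ha ha' hac =>
    lt_of_not_ge fun hca' => hc (hs ha ha' hac.le hca')
  exact ⟨key ha ha', key ha' ha⟩

theorem Consec.gt_iff_gt_of_notMem {s : Finset (Fin n)} (hs : Consec s) {a a' c : Fin n}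
    (ha : a ∈ s) (ha' : a' ∈ s) (hc : c ∉ s) : c < a ↔ c < a' := by
  rw [← not_iff_not, not_lt, not_lt, (ne_of_mem_of_not_mem ha hc).le_iff_lt,
    (ne_of_mem_of_not_mem ha' hc).le_iff_lt]
  exact hs.lt_iff_lt_of_notMem ha ha' hc

theorem isInflation_of_monotone (π : Equiv.Perm (Fin n)) (σ : Equiv.Perm (Fin m))
    (r : Fin n → Fin m) (hr : Monotone r) (e : Fin m → Fin n) (hre : ∀ i, r (e i) = i)
    (hσ : ∀ i j, σ i < σ j ↔ π (e i) < π (e j))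
    (hcons : ∀ i, Consec (({x | r x = i} : Finset (Fin n)).image π)) :
    IsInflation π σ fun i => {x | r x = i} := by
  have hmem : ∀ {x i}, x ∈ ({x | r x = i} : Finset (Fin n)) ↔ r x = i := by simp
  have hπmem : ∀ {x i}, π x ∈ ({x | r x = i} : Finset (Fin n)).image π ↔ r x = i := by
    simp [π.injective.eq_iff]
  refine ⟨fun i => ⟨e i, hmem.2 (hre i)⟩, fun i => ⟨?_, hcons i⟩, fun x => ⟨r x, by simp⟩,
    fun i j hij x hx y hy => ?_, fun i j hij x hx y hy => ?_⟩
  · intro a b c ha hc hab hbc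
    rw [hmem] at ha hc ⊢
    exact le_antisymm (hc ▸ hr hbc) (ha ▸ hr hab)
  · rw [hmem] at hx hy
    exact lt_of_not_ge fun hyx => hij.not_ge (hx ▸ hy ▸ hr hyx)
  · rw [hmem] at hx hy
    rw [hσ, (hcons i).lt_iff_lt_of_notMem (hπmem.2 (hre i)) (hπmem.2 hx)
      (fun h => hij ((hπmem.1 h).symm.trans (hre j))),
      (hcons j).gt_iff_gt_of_notMem (hπmem.2 (hre j)) (hπmem.2 hy)
      (fun h => hij (hx.symm.trans (hπmem.1 h)))]

theorem IsInflation.involves {π : Equiv.Perm (Fin n)} {σ : Equiv.Perm (Fin m)}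
    {blocks : Fin m → Finset (Fin n)} (h : IsInflation π σ blocks) {δ : Equiv.Perm (Fin k)}
    {y : Fin k → Fin n} (hy : StrictMono y) (hδ : ∀ a b, δ a < δ b ↔ π (y a) < π (y b))
    {g : Fin k → Fin m} (hg : Function.Injective g) (hyg : ∀ a, y a ∈ blocks (g a)) :
    Involves δ σ := by
  obtain ⟨-, -, -, hord, hcmp⟩ := h
  have hgmono : StrictMono g := fun a b hab =>
    lt_of_le_of_ne (not_lt.1 fun hba => (hy hab).not_gt (hord _ _ hba _ (hyg b) _ (hyg a)))
      (hg.ne hab.ne)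
  refine ⟨g, hgmono, fun a b => ?_⟩
  rcases eq_or_ne a b with rfl | hab
  · simp
  · rw [hδ, hcmp _ _ (hg.ne hab) _ (hyg a) _ (hyg b)]

end Inflations

section Breaks

variable {k n : ℕ}

def IsBreak (π : Equiv.Perm (Fin n)) (i j : Fin n) : Prop :=
  j.val = i.val + 1 ∧ (π j).val ≠ (π i).val + 1

def HasBreakBetween (π : Equiv.Perm (Fin n)) (u w : Fin n) : Prop :=
  ∃ i j, u ≤ i ∧ j ≤ w ∧ IsBreak π i j

theorem not_hasBreakBetween_of_mem {π : Equiv.Perm (Fin n)} {B : Finset (Fin n)}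
    (hB : IsInterval π B) (hmono : StrictMonoOn π B) {u w : Fin n} (hu : u ∈ B) (hw : w ∈ B) :
    ¬ HasBreakBetween π u w := by
  rintro ⟨i, j, hui, hjw, hij, hbreak⟩
  have hij' : i < j := Fin.lt_def.2 (by omega)
  have hiB : i ∈ B := hB.1 hu hw hui (hij'.le.trans hjw)
  have hjB : j ∈ B := hB.1 hu hw (hui.trans hij'.le) hjw
  have hlt : (π i).val + 1 < (π j).val :=
    lt_of_le_of_ne (Fin.lt_def.1 (hmono hiB hjB hij')) (Ne.symm hbreak)
  set c : Fin n := ⟨(π i).val + 1, by omega⟩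
  have hc : c ∈ B.image π :=
    hB.2 (mem_image_of_mem π hiB) (mem_image_of_mem π hjB) (Fin.le_def.2 (by simp [c]))
      (Fin.le_def.2 (by simp [c]; omega))
  obtain ⟨l, hlB, hl⟩ := mem_image.1 hc
  have hil : i < l := (hmono.lt_iff_lt hiB hlB).1 (Fin.lt_def.2 (by simp [hl, c]))
  have hlj : l < j := (hmono.lt_iff_lt hlB hjB).1 (Fin.lt_def.2 (by simp [hl, c]; omega))
  rw [Fin.lt_def] at hil hlj
  omega

theorem IsBreak.of_comp {τ : Equiv.Perm (Fin k)} {π : Equiv.Perm (Fin n)} {f : Fin k → Fin n}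
    (hf : StrictMono f) (hτ : ∀ a b, τ a < τ b ↔ π (f a) < π (f b)) {a b : Fin k}
    (hab : IsBreak π (f a) (f b))
    (hsucc : ∀ q, (π q).val = (π (f a)).val + 1 → q ∈ Set.range f) : IsBreak τ a b := by
  obtain ⟨hfab, hπab⟩ := hab
  have hlt : a < b := hf.lt_iff_lt.1 (Fin.lt_def.2 (by omega))
  have hadj : b.val = a.val + 1 := by
    by_contra hne
    have hl : a.val + 1 < k := by omega
    have h1 := hf (show a < ⟨a.val + 1, hl⟩ from Fin.lt_def.2 (by simp))
    have h2 := hf (show (⟨a.val + 1, hl⟩ : Fin k) < b from Fin.lt_def.2 (by simp; omega))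
    rw [Fin.lt_def] at h1 h2
    omega
  refine ⟨hadj, fun hτab => ?_⟩
  have hπ : (π (f a)).val + 1 < (π (f b)).val :=
    lt_of_le_of_ne (Fin.lt_def.1 ((hτ a b).1 (Fin.lt_def.2 (by omega)))) (Ne.symm hπab)
  obtain ⟨c, hc⟩ := hsucc (π.symm ⟨(π (f a)).val + 1, by omega⟩) (by simp)
  have hac := (hτ a c).2 (Fin.lt_def.2 (by simp [hc]))
  have hcb := (hτ c b).2 (Fin.lt_def.2 (by simp [hc]; omega))
  rw [Fin.lt_def] at hac hcb
  omega

end Breaks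

theorem exists_involves_of_inWreath_av21 {X : Set PermS} {N k : ℕ} {τ : Equiv.Perm (Fin N)}
    (hτ : InWreath X Av21 τ) {δ : Equiv.Perm (Fin k)} {y : Fin k → Fin N} (hy : StrictMono y)
    (hδ : ∀ a b, δ a < δ b ↔ τ (y a) < τ (y b))
    (hbrk : ∀ a b, a < b → HasBreakBetween τ (y a) (y b)) :
    ∃ s ∈ X, SInvolves ⟨k, δ⟩ s := by
  obtain ⟨m, σ, hσX, blocks, hinfl, hbl⟩ := hτ
  have hinc : ∀ i, StrictMonoOn τ (blocks i) := fun i => by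
    obtain ⟨c, α, hα, hpat⟩ := hbl i
    exact hpat.strictMono_iff.1 ((mem_av21_iff α).1 hα)
  choose g hg using fun a => (hinfl.2.2.1 (y a)).exists
  have hsep : ∀ a b, a < b → g a ≠ g b := fun a b hab hgab =>
    not_hasBreakBetween_of_mem (hinfl.2.1 (g a)) (hinc _) (hg a) (hgab ▸ hg b) (hbrk a b hab)
  have hginj : Function.Injective g := fun a b hgab => by
    by_contra hne
    rcases lt_or_gt_of_ne hne with h | h
    · exact hsep a b h hgab
    · exact hsep b a h hgab.symm
  exact ⟨⟨m, σ⟩, hσX, hinfl.involves hy hδ hginj hg⟩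

section Runs

variable (f : ℕ → ℕ)

def runIndex (x : ℕ) : ℕ := #{p ∈ range x | f (p + 1) ≠ f p + 1}

theorem runIndex_mono : Monotone (runIndex f) := fun _ _ h =>
  card_le_card (filter_subset_filter _ (range_subset_range.2 h))

theorem runIndex_succ (x : ℕ) :
    runIndex f (x + 1) = runIndex f x + if f (x + 1) ≠ f x + 1 then 1 else 0 := by
  unfold runIndex
  rw [range_add_one, filter_insert]
  split_ifs
  · rw [card_insert_of_notMem (by simp)]
  · rfl

theorem apply_add_of_runIndex_eq {x : ℕ} : ∀ {t : ℕ}, runIndex f (x + t) = runIndex f x →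
    f (x + t) = f x + t
  | 0, _ => rfl
  | t + 1, h => by
    have h1 := runIndex_mono f (Nat.le_add_right x t)
    have h2 := runIndex_succ f (x + t)
    rw [← add_assoc] at h ⊢
    split_ifs at h2 with hbrk
    · omega
    · rw [not_not.1 hbrk, apply_add_of_runIndex_eq (by omega), add_assoc]

theorem exists_break_of_runIndex_lt {x y : ℕ} (h : runIndex f x < runIndex f y) :
    ∃ p, x ≤ p ∧ p < y ∧ f (p + 1) ≠ f p + 1 := by
  by_contra! hnone
  refine h.not_ge (card_le_card fun p hp => ?_)
  simp only [mem_filter, mem_range] at hp ⊢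
  exact ⟨lt_of_not_ge fun hxp => hp.2 (hnone p hxp hp.1), hp.2⟩

theorem exists_runIndex_eq : ∀ {x i : ℕ}, i ≤ runIndex f x → ∃ z ≤ x, runIndex f z = i
  | 0, i, h => ⟨0, le_rfl, by simp_all [runIndex]⟩
  | x + 1, i, h => by
    rcases le_or_gt i (runIndex f x) with hi | hi
    · obtain ⟨z, hz, rfl⟩ := exists_runIndex_eq hi
      exact ⟨z, hz.trans x.le_succ, rfl⟩
    · have := runIndex_succ f x
      split_ifs at this <;> exact ⟨x + 1, le_rfl, by omega⟩

end Runs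

section RunDeflation

variable {n : ℕ} (π : Equiv.Perm (Fin n))

def permSeq (i : ℕ) : ℕ := if h : i < n then (π ⟨i, h⟩).val else 0

@[simp]
theorem permSeq_val (x : Fin n) : permSeq π x = π x := dif_pos x.isLt

variable {π}

theorem val_apply_of_runIndex_eq {x z : Fin n} (hxz : x ≤ z)
    (h : runIndex (permSeq π) z = runIndex (permSeq π) x) :
    (π z).val = (π x).val + (z.val - x.val) := by
  have hz : x.val + (z.val - x.val) = z.val := Nat.add_sub_of_le hxz
  have := apply_add_of_runIndex_eq (permSeq π) (x := x.val) (t := z.val - x.val) (by rwa [hz])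
  rwa [hz, permSeq_val, permSeq_val] at this

theorem apply_lt_apply_of_runIndex_eq {x z : Fin n} (hxz : x < z)
    (h : runIndex (permSeq π) z = runIndex (permSeq π) x) : π x < π z := by
  have := val_apply_of_runIndex_eq hxz.le h
  rw [Fin.lt_def] at hxz ⊢
  omega

theorem exists_apply_eq_of_runIndex_eq {x z : Fin n} (hxz : x ≤ z)
    (h : runIndex (permSeq π) z = runIndex (permSeq π) x) {b : Fin n} (hxb : π x ≤ b)
    (hbz : b ≤ π z) : ∃ w : Fin n, runIndex (permSeq π) w = runIndex (permSeq π) x ∧ π w = b := by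
  have hz := val_apply_of_runIndex_eq hxz h
  rw [Fin.le_def] at hxz hxb hbz
  set w : Fin n := ⟨x.val + (b.val - (π x).val), by omega⟩
  have hxw : x ≤ w := Fin.le_def.2 (by simp [w])
  have hwz : w ≤ z := Fin.le_def.2 (by simp [w]; omega)
  have hw : runIndex (permSeq π) w = runIndex (permSeq π) x :=
    le_antisymm (h ▸ runIndex_mono _ hwz) (runIndex_mono _ hxw)
  refine ⟨w, hw, Fin.ext ?_⟩
  rw [val_apply_of_runIndex_eq hxw hw]
  simp [w]
  omega

end RunDeflation

theorem exists_increasing_deflation {n : ℕ} (π : Equiv.Perm (Fin n)) (hn : 0 < n) :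
    ∃ (m : ℕ) (σ : Equiv.Perm (Fin m)) (blocks : Fin m → Finset (Fin n)) (e : Fin m → Fin n),
      IsInflation π σ blocks ∧ (∀ i, StrictMonoOn π (blocks i)) ∧ StrictMono e ∧
      (∀ i j, σ i < σ j ↔ π (e i) < π (e j)) ∧
      ∀ i j, i < j → HasBreakBetween π (e i) (e j) := by
  set f := permSeq π
  set K := runIndex f (n - 1)
  set r : Fin n → Fin (K + 1) := fun x =>
    ⟨runIndex f x, Nat.lt_succ_of_le (runIndex_mono f (by omega))⟩
  have hr_val : ∀ {x i}, r x = i ↔ runIndex f x = i.val := Fin.ext_iff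
  have hr : Monotone r := fun x y hxy => Fin.le_def.2 (runIndex_mono f hxy)
  choose e he using fun i : Fin (K + 1) =>
    let ⟨z, hz, hzi⟩ := exists_runIndex_eq f (Nat.lt_succ_iff.1 i.isLt)
    (⟨⟨z, by omega⟩, Fin.ext hzi⟩ : ∃ x, r x = i)
  have he_mono : StrictMono e := fun i j hij =>
    lt_of_not_ge fun hji => hij.not_ge (he i ▸ he j ▸ hr hji)
  obtain ⟨σ, hσ⟩ := exists_perm_lt_iff_lt (π ∘ e) (π.injective.comp he_mono.injective)
  have hinc : ∀ i, StrictMonoOn π ({x | r x = i} : Finset (Fin n)) := by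
    intro i x hx z hz hxz
    simp only [coe_filter, mem_univ, true_and, Set.mem_ofPred_eq, hr_val] at hx hz
    exact apply_lt_apply_of_runIndex_eq hxz (hz.trans hx.symm)
  have hcons : ∀ i, Consec (({x | r x = i} : Finset (Fin n)).image π) := by
    intro i a b c ha hc hab hbc
    obtain ⟨x, hx, rfl⟩ := mem_image.1 ha
    obtain ⟨z, hz, rfl⟩ := mem_image.1 hc
    simp only [mem_filter, mem_univ, true_and, hr_val] at hx hz
    obtain ⟨w, hw, rfl⟩ := exists_apply_eq_of_runIndex_eq
      (((hinc i).le_iff_le (by simp [hr_val, hx]) (by simp [hr_val, hz])).1 (hab.trans hbc))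
      (hz.trans hx.symm) hab hbc
    exact mem_image_of_mem π (by simpa [hr_val] using hw.trans hx)
  refine ⟨K + 1, σ, _, e, isInflation_of_monotone π σ r hr e he hσ hcons, hinc, he_mono, hσ,
    fun i j hij => ?_⟩
  obtain ⟨p, hip, hpj, hbrk⟩ := exists_break_of_runIndex_lt f
    (show runIndex f (e i) < runIndex f (e j) by rwa [hr_val.1 (he i), hr_val.1 (he j)])
  refine ⟨⟨p, by omega⟩, ⟨p + 1, by omega⟩, Fin.le_def.2 hip, Fin.le_def.2 hpj, rfl, ?_⟩
  simpa [f, permSeq, show p < n by omega, show p + 1 < n by omega] using hbrk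

section Basis

variable {n : ℕ}

/-- If `(i, j)` is a break of `π`, it is still a break in the pattern of `π` on any set of
positions containing `breakWitness π i j`. -/
def breakWitness (π : Equiv.Perm (Fin n)) (i j : Fin n) : Finset (Fin n) :=
  insert i (insert j ({q | (π q).val = (π i).val + 1} : Finset (Fin n)))

theorem card_breakWitness_le (π : Equiv.Perm (Fin n)) (i j : Fin n) :
    #(breakWitness π i j) ≤ 3 := by
  have hsucc : #({q | (π q).val = (π i).val + 1} : Finset (Fin n)) ≤ 1 :=
    card_le_one.2 fun a ha b hb => π.injective (Fin.ext (by simp at ha hb; omega))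
  exact (card_insert_le _ _).trans (Nat.succ_le_succ ((card_insert_le _ _).trans
    (Nat.succ_le_succ hsucc)))

theorem exists_small_pattern_hasBreakBetween (π : Equiv.Perm (Fin n)) {k : ℕ}
    {y : Fin k → Fin n} (hy : StrictMono y)
    (hbrk : ∀ a b, a < b → HasBreakBetween π (y a) (y b)) :
    ∃ (S : Finset (Fin n)) (τ : Equiv.Perm (Fin #S)) (ι : Fin k → Fin #S),
      #S ≤ k + (k - 1) * 3 ∧ IsPatternOf τ π S ∧ StrictMono ι ∧
      (∀ a b, τ (ι a) < τ (ι b) ↔ π (y a) < π (y b)) ∧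
      ∀ a b, a < b → HasBreakBetween τ (ι a) (ι b) := by
  choose i j hi hj hij using fun c : Fin (k - 1) =>
    hbrk ⟨c, by omega⟩ ⟨c + 1, by omega⟩ (Fin.lt_def.2 (Nat.lt_succ_self _))
  set S := univ.image y ∪ univ.biUnion fun c => breakWitness π (i c) (j c)
  have hcard : #S ≤ k + (k - 1) * 3 := by
    refine (card_union_le _ _).trans (add_le_add (card_image_le.trans (by simp)) ?_)
    simpa using card_biUnion_le_card_mul univ _ 3 fun c _ => card_breakWitness_le π (i c) (j c)
  have hwS : ∀ c, breakWitness π (i c) (j c) ⊆ S := fun c =>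
    subset_union_right.trans'
      (subset_biUnion_of_mem (fun c => breakWitness π (i c) (j c)) (mem_univ c))
  obtain ⟨τ, hpat⟩ := exists_isPatternOf π S
  obtain ⟨f, hf, -, hSf, hτ⟩ := id hpat
  choose ι hι using fun a => hSf (y a) (mem_union_left _ (mem_image_of_mem y (mem_univ a)))
  refine ⟨S, τ, ι, hcard, hpat, fun a b hab => hf.lt_iff_lt.1 (by rw [hι, hι]; exact hy hab),
    fun a b => by rw [hτ, hι, hι], fun a b hab => ?_⟩
  set c : Fin (k - 1) := ⟨a, by omega⟩
  obtain ⟨i', hi'⟩ := hSf (i c) (hwS c (mem_insert_self _ _))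
  obtain ⟨j', hj'⟩ := hSf (j c) (hwS c (mem_insert_of_mem (mem_insert_self _ _)))
  refine ⟨i', j', hf.le_iff_le.1 ?_, hf.le_iff_le.1 ?_, IsBreak.of_comp hf hτ ?_ ?_⟩
  · rw [hι, hi']
    exact hi c
  · rw [hι, hj']
    exact (hj c).trans (hy.monotone (Fin.le_def.2 (by simp [c]; omega)))
  · rw [hi', hj']
    exact hij c
  · intro q hq
    exact hSf q (hwS c (mem_insert_of_mem (mem_insert_of_mem (by simpa [hi'] using hq))))

theorem mem_wreath_or_exists_hasBreakBetween (π : Equiv.Perm (Fin n)) (hn : 0 < n)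
    (D : Set PermS) :
    (⟨n, π⟩ : PermS) ∈ WreathSet (Av D) Av21 ∨
      ∃ δ ∈ D, ∃ y : Fin δ.1 → Fin n, StrictMono y ∧
        (∀ a b, δ.2 a < δ.2 b ↔ π (y a) < π (y b)) ∧
        ∀ a b, a < b → HasBreakBetween π (y a) (y b) := by
  obtain ⟨m, σ, blocks, e, hinfl, hinc, he, hσ, hbrk⟩ := exists_increasing_deflation π hn
  by_cases hσD : (⟨m, σ⟩ : PermS) ∈ Av D
  · refine .inl ⟨m, σ, hσD, blocks, hinfl, fun i => ?_⟩
    obtain ⟨α, hα⟩ := exists_isPatternOf π (blocks i)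
    exact ⟨_, α, (mem_av21_iff α).2 (hα.strictMono_iff.2 (hinc i)), hα⟩
  · simp only [Av, Set.mem_ofPred_eq, not_forall, not_not] at hσD
    obtain ⟨δ, hδD, g, hg, hδg⟩ := hσD
    exact .inr ⟨δ, hδD, e ∘ g, he.comp hg, fun a b => (hδg a b).trans (hσ _ _),
      fun a b hab => hbrk _ _ (hg hab)⟩

theorem length_le_of_mem_permBasis {D : Set PermS} {d : ℕ} (hd : ∀ s ∈ D, s.1 ≤ d) {s : PermS}
    (hs : s ∈ PermBasis (WreathSet (Av D) Av21)) : s.1 ≤ d + (d - 1) * 3 := by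
  obtain ⟨n, π⟩ := s
  obtain ⟨hπ, hmin⟩ := hs
  rcases Nat.eq_zero_or_pos n with rfl | hn
  · exact Nat.zero_le _
  obtain ⟨⟨k, δ⟩, hδD, y, hy, hδ, hbrk⟩ :=
    (mem_wreath_or_exists_hasBreakBetween π hn D).resolve_left hπ
  obtain ⟨S, τ, ι, hcard, hpat, hι, hτ, hτbrk⟩ := exists_small_pattern_hasBreakBetween π hy hbrk
  have hτW : (⟨#S, τ⟩ : PermS) ∉ WreathSet (Av D) Av21 := fun hτW => by
    obtain ⟨t, ht, hδt⟩ := exists_involves_of_inWreath_av21 hτW hι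
      (fun a b => (hδ a b).trans (hτ a b).symm) hτbrk
    exact ht _ hδD hδt
  have hSn : #S = n := by
    by_contra hne
    exact hτW (hmin _ hpat.sInvolves fun h => hne (congrArg Sigma.fst h))
  have hk := hd _ hδD
  dsimp only at hcard hk ⊢
  omega

end Basis

theorem finite_setOf_fst_le (N : ℕ) : {s : PermS | s.1 ≤ N}.Finite :=
  (Set.finite_range fun s : Σ i : Fin (N + 1), Equiv.Perm (Fin i) => (⟨s.1, s.2⟩ : PermS)).subset
    fun s hs => ⟨⟨⟨s.1, Nat.lt_succ_of_le hs⟩, s.2⟩, rfl⟩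

/-- there is an absolute constant `b` such that for every finitely
based class `X = Av(D)` whose basis elements have length at most `d`, the wreath
product `X ≀ Av(21)` is finitely based, with every basis element of length at most
`d + (d-1)·b`. -/
theorem wreath_av21_finitely_based :
    ∃ b : ℕ, ∀ D : Set PermS, D.Finite → ∀ d : ℕ, (∀ s ∈ D, s.1 ≤ d) →
      (PermBasis (WreathSet (Av D) (Av {(⟨2, Equiv.swap 0 1⟩ : PermS)}))).Finite ∧
      ∀ s ∈ PermBasis (WreathSet (Av D) (Av {(⟨2, Equiv.swap 0 1⟩ : PermS)})),
        s.1 ≤ d + (d - 1) * b :=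
  ⟨3, fun _ _ _ hd => ⟨(finite_setOf_fst_le _).subset fun _ hs => length_le_of_mem_permBasis hd hs,
    fun _ hs => length_le_of_mem_permBasis hd hs⟩⟩
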